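/- For every finite strategic game H, GW^ω = LW^ω: the outcome of iterating the global elimination of strategies weakly dominated by a pure strategy equals the outcome of iterating the local elimination of strategies weakly dominated by a pure strategy, both started from H. -/

import Mathlib

open Function

/-- The opponents' part of the joint strategy `t` lies in the restriction `G`. -/
def OppIn {ι : Type*} [DecidableEq ι] {σ : ι → Type*} (G : ∀ i, Set (σ i)) (i : ι) (t : ∀ j, σ j) : Prop :=
  ∀ j, j ≠ i → t j ∈ G j

/-- `s'` strictly dominates `s` on the restriction `G` (pure strategies). -/
def SDom {ι : Type*} [DecidableEq ι] {σ : ι → Type*} (p : ι → (∀ j, σ j) → ℝ) (G : ∀ i, Set (σ i))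
    (i : ι) (s' s : σ i) : Prop :=
  ∀ t : ∀ j, σ j, OppIn G i t → p i (update t i s) < p i (update t i s')

/-- `s'` weakly dominates `s` on the restriction `G` (pure strategies). -/
def WDom {ι : Type*} [DecidableEq ι] {σ : ι → Type*} (p : ι → (∀ j, σ j) → ℝ) (G : ∀ i, Set (σ i))
    (i : ι) (s' s : σ i) : Prop :=
  (∀ t : ∀ j, σ j, OppIn G i t → p i (update t i s) ≤ p i (update t i s')) ∧
  (∃ t : ∀ j, σ j, OppIn G i t ∧ p i (update t i s) < p i (update t i s'))

/-- Probability distributions over a finite type with support contained in `A`. -/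
def Mixed {α : Type*} [Fintype α] (A : Set α) : Set (α → ℝ) :=
  {m | (∀ a, 0 ≤ m a) ∧ ∑ a, m a = 1 ∧ ∀ a, m a ≠ 0 → a ∈ A}

/-- Expected payoff of player `i` using mixed strategy `m` against `t₋ᵢ`. -/
def epay {ι : Type*} [DecidableEq ι] {σ : ι → Type*} [∀ i, Fintype (σ i)]
    (p : ι → (∀ j, σ j) → ℝ) (i : ι) (m : σ i → ℝ) (t : ∀ j, σ j) : ℝ :=
  ∑ a, m a * p i (update t i a)

/-- The mixed strategy `m` strictly dominates `s` on `G`. -/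
def MSDom {ι : Type*} [DecidableEq ι] {σ : ι → Type*} [∀ i, Fintype (σ i)]
    (p : ι → (∀ j, σ j) → ℝ) (G : ∀ i, Set (σ i)) (i : ι) (m : σ i → ℝ) (s : σ i) : Prop :=
  ∀ t : ∀ j, σ j, OppIn G i t → p i (update t i s) < epay p i m t

/-- The mixed strategy `m` weakly dominates `s` on `G`. -/
def MWDom {ι : Type*} [DecidableEq ι] {σ : ι → Type*} [∀ i, Fintype (σ i)]
    (p : ι → (∀ j, σ j) → ℝ) (G : ∀ i, Set (σ i)) (i : ι) (m : σ i → ℝ) (s : σ i) : Prop :=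
  (∀ t : ∀ j, σ j, OppIn G i t → p i (update t i s) ≤ epay p i m t) ∧
  (∃ t : ∀ j, σ j, OppIn G i t ∧ p i (update t i s) < epay p i m t)

/-- Local elimination of strategies strictly dominated by a pure strategy. -/
def LS {ι : Type*} [DecidableEq ι] {σ : ι → Type*} (p : ι → (∀ j, σ j) → ℝ)
    (G : ∀ i, Set (σ i)) : ∀ i, Set (σ i) :=
  fun i => {s | s ∈ G i ∧ ¬ ∃ s' ∈ G i, SDom p G i s' s}

/-- Global elimination of strategies strictly dominated by a pure strategy. -/
def GS {ι : Type*} [DecidableEq ι] {σ : ι → Type*} (p : ι → (∀ j, σ j) → ℝ)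
    (G : ∀ i, Set (σ i)) : ∀ i, Set (σ i) :=
  fun i => {s | s ∈ G i ∧ ¬ ∃ s' : σ i, SDom p G i s' s}

/-- Local elimination of strategies weakly dominated by a pure strategy. -/
def LW {ι : Type*} [DecidableEq ι] {σ : ι → Type*} (p : ι → (∀ j, σ j) → ℝ)
    (G : ∀ i, Set (σ i)) : ∀ i, Set (σ i) :=
  fun i => {s | s ∈ G i ∧ ¬ ∃ s' ∈ G i, WDom p G i s' s}

/-- Global elimination of strategies weakly dominated by a pure strategy. -/
def GW {ι : Type*} [DecidableEq ι] {σ : ι → Type*} (p : ι → (∀ j, σ j) → ℝ)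
    (G : ∀ i, Set (σ i)) : ∀ i, Set (σ i) :=
  fun i => {s | s ∈ G i ∧ ¬ ∃ s' : σ i, WDom p G i s' s}

/-- Local elimination of strategies strictly dominated by a mixed strategy. -/
def MLS {ι : Type*} [DecidableEq ι] {σ : ι → Type*} [∀ i, Fintype (σ i)] (p : ι → (∀ j, σ j) → ℝ)
    (G : ∀ i, Set (σ i)) : ∀ i, Set (σ i) :=
  fun i => {s | s ∈ G i ∧ ¬ ∃ m ∈ Mixed (G i), MSDom p G i m s}

/-- Global elimination of strategies strictly dominated by a mixed strategy. -/
def MGS {ι : Type*} [DecidableEq ι] {σ : ι → Type*} [∀ i, Fintype (σ i)] (p : ι → (∀ j, σ j) → ℝ)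
    (G : ∀ i, Set (σ i)) : ∀ i, Set (σ i) :=
  fun i => {s | s ∈ G i ∧ ¬ ∃ m ∈ Mixed (Set.univ : Set (σ i)), MSDom p G i m s}

/-- Local elimination of strategies weakly dominated by a mixed strategy. -/
def MLW {ι : Type*} [DecidableEq ι] {σ : ι → Type*} [∀ i, Fintype (σ i)] (p : ι → (∀ j, σ j) → ℝ)
    (G : ∀ i, Set (σ i)) : ∀ i, Set (σ i) :=
  fun i => {s | s ∈ G i ∧ ¬ ∃ m ∈ Mixed (G i), MWDom p G i m s}

/-- Global elimination of strategies weakly dominated by a mixed strategy. -/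
def MGW {ι : Type*} [DecidableEq ι] {σ : ι → Type*} [∀ i, Fintype (σ i)] (p : ι → (∀ j, σ j) → ℝ)
    (G : ∀ i, Set (σ i)) : ∀ i, Set (σ i) :=
  fun i => {s | s ∈ G i ∧ ¬ ∃ m ∈ Mixed (Set.univ : Set (σ i)), MWDom p G i m s}

/-!
For every `k` and every strategy `s ∈ Tᵢ` there is `u ∈ LWᵏ(H)ᵢ` doing at least as well as `s`
against `LWᵏ(H)₋ᵢ`: given such a `u` for stage `k`, a strategy of `LWᵏ(H)ᵢ` that does at least as
well as `u` and is maximal for weak dominance exists because weak dominance is a strict order on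
the finite set `Tᵢ`, and it survives into `LWᵏ⁺¹(H)ᵢ`. So whenever some `s' ∈ Tᵢ` weakly dominates
`s` on `LWᵏ(H)`, its match inside `LWᵏ(H)ᵢ` does too; hence `GW` and `LW` agree on every
`LWᵏ(H)` and the two iterations coincide stage by stage.
-/

section PureDominance

variable {ι : Type*} [DecidableEq ι] {σ : ι → Type*} (p : ι → (∀ j, σ j) → ℝ)

def PayoffLE (G : ∀ i, Set (σ i)) (i : ι) (s s' : σ i) : Prop :=
  ∀ t : ∀ j, σ j, OppIn G i t → p i (update t i s) ≤ p i (update t i s')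

variable {p}

theorem OppIn.mono {G H : ∀ i, Set (σ i)} (hGH : G ≤ H) {i : ι} {t : ∀ j, σ j}
    (ht : OppIn G i t) : OppIn H i t :=
  fun j hj => hGH j (ht j hj)

theorem PayoffLE.trans {G : ∀ i, Set (σ i)} {i : ι} {a b c : σ i}
    (hab : PayoffLE p G i a b) (hbc : PayoffLE p G i b c) : PayoffLE p G i a c :=
  fun t ht => (hab t ht).trans (hbc t ht)

theorem PayoffLE.anti {G H : ∀ i, Set (σ i)} (hGH : G ≤ H) {i : ι} {s s' : σ i}
    (h : PayoffLE p H i s s') : PayoffLE p G i s s' :=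
  fun t ht => h t (ht.mono hGH)

theorem WDom.payoffLE {G : ∀ i, Set (σ i)} {i : ι} {s' s : σ i} (h : WDom p G i s' s) :
    PayoffLE p G i s s' :=
  h.1

theorem WDom.trans_payoffLE {G : ∀ i, Set (σ i)} {i : ι} {s s' u : σ i}
    (h : WDom p G i s' s) (hu : PayoffLE p G i s' u) : WDom p G i u s := by
  obtain ⟨t, ht, hlt⟩ := h.2
  exact ⟨h.payoffLE.trans hu, t, ht, hlt.trans_le (hu t ht)⟩

theorem WDom.irrefl (G : ∀ i, Set (σ i)) (i : ι) (s : σ i) : ¬ WDom p G i s s := by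
  rintro ⟨-, t, -, hlt⟩
  exact hlt.false

instance (G : ∀ i, Set (σ i)) (i : ι) : IsTrans (σ i) (WDom p G i) :=
  ⟨fun _ _ _ hab hbc => hbc.trans_payoffLE hab.payoffLE⟩

instance (G : ∀ i, Set (σ i)) (i : ι) : Std.Irrefl (WDom p G i) :=
  ⟨WDom.irrefl G i⟩

theorem LW_le (G : ∀ i, Set (σ i)) : LW p G ≤ G :=
  fun _ _ hs => hs.1

theorem exists_mem_LW_payoffLE [∀ i, Finite (σ i)] {G : ∀ i, Set (σ i)} {i : ι} {s : σ i}
    (hs : s ∈ G i) : ∃ u ∈ LW p G i, PayoffLE p G i s u := by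
  obtain ⟨u, ⟨huG, hsu⟩, hmax⟩ := (Finite.wellFounded_of_trans_of_irrefl (WDom p G i)).has_min
    {u | u ∈ G i ∧ PayoffLE p G i s u} ⟨s, hs, fun _ _ => le_rfl⟩
  refine ⟨u, ⟨huG, ?_⟩, hsu⟩
  rintro ⟨v, hvG, hvu⟩
  exact hmax v ⟨hvG, hsu.trans hvu.payoffLE⟩ hvu

theorem exists_mem_iterate_LW_payoffLE [∀ i, Finite (σ i)] (k : ℕ) (i : ι) (s : σ i) :
    ∃ u ∈ (LW p)^[k] ⊤ i, PayoffLE p ((LW p)^[k] ⊤) i s u := by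
  induction k with
  | zero => exact ⟨s, trivial, fun _ _ => le_rfl⟩
  | succ k ih =>
    obtain ⟨u, hu, hsu⟩ := ih
    obtain ⟨v, hv, huv⟩ := exists_mem_LW_payoffLE hu
    rw [iterate_succ_apply']
    exact ⟨v, hv, (hsu.trans huv).anti (LW_le _)⟩

theorem GW_eq_LW_of_forall_exists_mem_payoffLE {G : ∀ i, Set (σ i)}
    (hG : ∀ i s, ∃ u ∈ G i, PayoffLE p G i s u) : GW p G = LW p G := by
  funext i
  ext s
  refine and_congr_right fun _ => not_congr ⟨fun ⟨s', hs'⟩ => ?_, fun ⟨s', _, hs'⟩ => ⟨s', hs'⟩⟩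
  obtain ⟨u, hu, hs'u⟩ := hG i s'
  exact ⟨u, hu, hs'.trans_payoffLE hs'u⟩

theorem iterate_GW_eq_iterate_LW [∀ i, Finite (σ i)] (k : ℕ) :
    (GW p)^[k] ⊤ = (LW p)^[k] ⊤ := by
  induction k with
  | zero => rfl
  | succ k ih =>
    rw [iterate_succ_apply', iterate_succ_apply', ih,
      GW_eq_LW_of_forall_exists_mem_payoffLE (exists_mem_iterate_LW_payoffLE k)]

end PureDominance

theorem GW_omega_eq_LW_omega_general {ι : Type*} [DecidableEq ι] {σ : ι → Type*}
    [∀ i, Fintype (σ i)] (p : ι → (∀ j, σ j) → ℝ) :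
    (⨅ k : ℕ, (GW p)^[k] ⊤) = ⨅ k : ℕ, (LW p)^[k] ⊤ :=
  iInf_congr iterate_GW_eq_iterate_LW

/-- GW^ω = LW^ω. -/
theorem GW_omega_eq_LW_omega {ι : Type*} [DecidableEq ι] [Fintype ι] {σ : ι → Type*}
    [∀ i, Fintype (σ i)] [∀ i, Nonempty (σ i)]
    (hn : 1 < Fintype.card ι) (p : ι → (∀ j, σ j) → ℝ) :
    (⨅ k : ℕ, (GW p)^[k] ⊤) = ⨅ k : ℕ, (LW p)^[k] ⊤ :=
  GW_omega_eq_LW_omega_general p
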